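/- Let K be an elementary extension of ℚ_p, V the convex hull of ℚ_p, and μ the ideal of infinitesimals. Let f(x) = a_n x^n + ... + a_1 x + a_0 be a polynomial over K with all coefficients in V and leading coefficient a_n ∉ μ. Then every root b ∈ K of f lies in V. -/

import Mathlib

open FirstOrder Language Set FirstOrder.Ring

noncomputable local instance {p : ℕ} [Fact p.Prime] : CompatibleRing ℚ_[p] :=
  compatibleRingOfRing _

/-- The data of an elementary extension `K` of `ℚ_p` in the language of rings,
together with its valuation (with value group `Γ` extending `ℤ`) and the valuation
topology on `K`. -/
structure PadicElemExt (p : ℕ) [Fact p.Prime] (K : Type*) [Field K] [CompatibleRing K]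
    (Γ : Type*) [AddCommGroup Γ] [LinearOrder Γ] [IsOrderedAddMonoid Γ] [TopologicalSpace K] where
  /-- the elementary embedding `ℚ_p ≼ K` in the language of rings -/
  e : ℚ_[p] ↪ₑ[Language.ring] K
  /-- the embedding of `ℤ` into the value group of `K` -/
  ι : ℤ →+ Γ
  ι_mono : StrictMono ι
  /-- the valuation on `K` (the value at `0` is junk) -/
  v : K → Γ
  v_mul : ∀ x y : K, x ≠ 0 → y ≠ 0 → v (x * y) = v x + v y
  v_add : ∀ x y : K, x ≠ 0 → y ≠ 0 → x + y ≠ 0 → min (v x) (v y) ≤ v (x + y)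
  v_ext : ∀ a : ℚ_[p], a ≠ 0 → v (e a) = ι a.valuation
  topBasis : ∀ s : Set K, IsOpen s ↔
    ∀ a ∈ s, ∃ γ : Γ, ∀ b : K, (b = a ∨ γ < v (b - a)) → b ∈ s

variable {p : ℕ} [Fact p.Prime] {K Γ : Type*} [Field K] [CompatibleRing K]
  [AddCommGroup Γ] [LinearOrder Γ] [IsOrderedAddMonoid Γ] [TopologicalSpace K]

/-- The convex hull `V` of `ℚ_p` in `K`: elements of bounded valuation from below by `ℤ`. -/
def PadicElemExt.V (S : PadicElemExt p K Γ) : Set K :=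
  {x | x = 0 ∨ ∃ n : ℤ, S.ι n < S.v x}

/-- The set `μ` of infinitesimals of `K` over `ℚ_p`. -/
def PadicElemExt.μ (S : PadicElemExt p K Γ) : Set K :=
  {x | x = 0 ∨ ∀ n : ℤ, S.ι n < S.v x}

/-- Topological dimension of a subset of `M^n`: the largest `k` such that the image of some
projection onto `k` coordinates has nonempty interior. -/
noncomputable def pdim {M : Type*} [TopologicalSpace M] {n : ℕ} (X : Set (Fin n → M)) : ℕ :=
  sSup {k : ℕ | ∃ r : Fin k → Fin n, StrictMono r ∧
    (interior ((fun x : Fin n → M => x ∘ r) '' X)).Nonempty}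

/-!
If a root `b` were outside `V`, then `b⁻¹ ∈ μ`. Now `V` is a subring of `K` and `μ` an ideal of
`V`, and `b⁻¹` is a root of the reversed polynomial `xⁿ f(1/x)`, which has coefficients in `V`
and constant term `aₙ`. Evaluating at a point of the ideal `μ` leaves the constant term modulo
`μ`, so `aₙ ∈ μ`.
-/

open Polynomial in
theorem Polynomial.leadingCoeff_mem_of_inv_root_mem {K : Type*} [Field K] {T : Subring K}
    (I : Ideal T) {f : K[X]} (hf : ∀ i, f.coeff i ∈ T) {b : K} (hb : f.eval b = 0)
    {c : T} (hcI : c ∈ I) (hbc : b * c = 1) : ⟨f.leadingCoeff, hf _⟩ ∈ I := by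
  have hfT : (f.coeffs : Set K) ⊆ T := fun a ha => by
    obtain ⟨n, -, rfl⟩ := mem_coeffs_iff.mp ha
    exact hf n
  let _ : Invertible b := ⟨c, by rw [mul_comm, hbc], hbc⟩
  have hroot : (f.toSubring T hfT).reverse.eval c = 0 := by
    apply T.subtype_injective
    rw [map_zero, ← eval₂_at_apply]
    change eval₂ T.subtype (⅟b) _ = 0
    rw [eval₂_reverse_eq_zero_iff, ← eval_map, map_toSubring, hb]
  have h := Ideal.coeff_zero_mem_comap_of_root_mem (f := RingHom.id T) hcI hroot
  rw [Ideal.comap_id, coeff_zero_reverse] at h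
  convert h
  ext
  simp only [leadingCoeff, natDegree_toSubring, coeff_toSubring]

namespace PadicElemExt

variable (S : PadicElemExt p K Γ)

lemma v_one : S.v 1 = 0 := by
  have h := S.v_mul 1 1 one_ne_zero one_ne_zero
  rw [mul_one] at h
  exact left_eq_add.mp h

lemma v_neg_one : S.v (-1) = 0 := by
  have h := S.v_mul (-1) (-1) (by simp) (by simp)
  rw [neg_one_mul, neg_neg, v_one] at h
  grind

lemma v_neg {x : K} (hx : x ≠ 0) : S.v (-x) = S.v x := by
  rw [← neg_one_mul, S.v_mul _ _ (by simp) hx, v_neg_one, zero_add]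

lemma v_inv {x : K} (hx : x ≠ 0) : S.v x⁻¹ = -S.v x := by
  have h := S.v_mul x x⁻¹ hx (inv_ne_zero hx)
  rw [mul_inv_cancel₀ hx, v_one] at h
  exact eq_neg_of_add_eq_zero_right h.symm

variable {S}

lemma one_mem_V : (1 : K) ∈ S.V :=
  Or.inr ⟨-1, by rw [v_one, map_neg, neg_neg_iff_pos, ← S.ι.map_zero]; exact S.ι_mono one_pos⟩

lemma neg_mem_V {x : K} (hx : x ∈ S.V) : -x ∈ S.V := by
  rcases eq_or_ne x 0 with rfl | hx0
  · exact Or.inl neg_zero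
  obtain ⟨n, hn⟩ := hx.resolve_left hx0
  exact Or.inr ⟨n, by rwa [S.v_neg hx0]⟩

lemma add_mem_V {x y : K} (hx : x ∈ S.V) (hy : y ∈ S.V) : x + y ∈ S.V := by
  rcases eq_or_ne x 0 with rfl | hx0
  · rwa [zero_add]
  rcases eq_or_ne y 0 with rfl | hy0
  · rwa [add_zero]
  by_cases hxy : x + y = 0
  · exact Or.inl hxy
  obtain ⟨m, hm⟩ := hx.resolve_left hx0
  obtain ⟨n, hn⟩ := hy.resolve_left hy0
  refine Or.inr ⟨min m n, ?_⟩
  rw [S.ι_mono.monotone.map_min]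
  exact (min_lt_min hm hn).trans_le (S.v_add x y hx0 hy0 hxy)

lemma mul_mem_V {x y : K} (hx : x ∈ S.V) (hy : y ∈ S.V) : x * y ∈ S.V := by
  rcases eq_or_ne x 0 with rfl | hx0
  · exact Or.inl (zero_mul y)
  rcases eq_or_ne y 0 with rfl | hy0
  · exact Or.inl (mul_zero x)
  obtain ⟨m, hm⟩ := hx.resolve_left hx0
  obtain ⟨n, hn⟩ := hy.resolve_left hy0
  refine Or.inr ⟨m + n, ?_⟩
  rw [map_add, S.v_mul x y hx0 hy0]
  exact add_lt_add hm hn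

lemma mem_V_of_mem_μ {x : K} (hx : x ∈ S.μ) : x ∈ S.V :=
  hx.imp_right fun h => ⟨0, h 0⟩

lemma add_mem_μ {x y : K} (hx : x ∈ S.μ) (hy : y ∈ S.μ) : x + y ∈ S.μ := by
  rcases eq_or_ne x 0 with rfl | hx0
  · rwa [zero_add]
  rcases eq_or_ne y 0 with rfl | hy0
  · rwa [add_zero]
  by_cases hxy : x + y = 0
  · exact Or.inl hxy
  have hx := hx.resolve_left hx0
  have hy := hy.resolve_left hy0
  exact Or.inr fun n => (lt_min (hx n) (hy n)).trans_le (S.v_add x y hx0 hy0 hxy)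

lemma mul_mem_μ {x y : K} (hx : x ∈ S.V) (hy : y ∈ S.μ) : x * y ∈ S.μ := by
  rcases eq_or_ne x 0 with rfl | hx0
  · exact Or.inl (zero_mul y)
  rcases eq_or_ne y 0 with rfl | hy0
  · exact Or.inl (mul_zero x)
  obtain ⟨m, hm⟩ := hx.resolve_left hx0
  have hy := hy.resolve_left hy0
  refine Or.inr fun n => ?_
  rw [S.v_mul x y hx0 hy0, ← add_sub_cancel m n, map_add]
  exact add_lt_add hm (hy _)

lemma inv_mem_μ {x : K} (hx : x ∉ S.V) : x⁻¹ ∈ S.μ := by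
  have hx0 : x ≠ 0 := fun h => hx (Or.inl h)
  have hle : ∀ n, S.v x ≤ S.ι n := fun n => not_lt.mp fun h => hx (Or.inr ⟨n, h⟩)
  refine Or.inr fun n => ?_
  rw [S.v_inv hx0, lt_neg, ← map_neg]
  exact (hle _).trans_lt (S.ι_mono (neg_lt_neg (lt_add_one n)))

variable (S)

def subringV : Subring K where
  carrier := S.V
  one_mem' := one_mem_V
  zero_mem' := Or.inl rfl
  neg_mem' := neg_mem_V
  add_mem' := add_mem_V
  mul_mem' := mul_mem_V

def idealμ : Ideal S.subringV where
  carrier := {x | (x : K) ∈ S.μ}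
  zero_mem' := Or.inl rfl
  add_mem' := add_mem_μ
  smul_mem' x _ hy := mul_mem_μ x.2 hy

end PadicElemExt

/-- Let `f = a_n x^n + ... + a_0` over `K` with all coefficients in `V` and
leading coefficient `a_n ∉ μ`. Then every root `b ∈ K` of `f` lies in `V`. -/
theorem stmt_11 (S : PadicElemExt p K Γ)
    (f : Polynomial K) (hf : ∀ i, f.coeff i ∈ S.V) (hlead : f.leadingCoeff ∉ S.μ)
    (b : K) (hb : f.eval b = 0) :
    b ∈ S.V := by
  by_contra hbV
  have hb0 : b ≠ 0 := fun h => hbV (Or.inl h)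
  have hbinv : b⁻¹ ∈ S.μ := PadicElemExt.inv_mem_μ hbV
  exact hlead <| Polynomial.leadingCoeff_mem_of_inv_root_mem S.idealμ hf hb
    (c := ⟨b⁻¹, PadicElemExt.mem_V_of_mem_μ hbinv⟩) hbinv (mul_inv_cancel₀ hb0)
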